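/- Let t ≥ 1 and c ≥ 1 be natural numbers. If the exponent of the unit group (ℤ/cℤ)^× divides t, then c divides N_t. -/

import Mathlib

/-!
For every divisor `m` of `c` the exponent of `(ℤ/mℤ)ˣ` divides `t`, so `x ^ t ≡ 1 [MOD m]` for every
`x` prime to `m`. Taking `x = -1` gives `c ∣ 2` when `t` is odd. For even `t` and `p ^ k ∣ c`, the
cyclic group `(ℤ/pℤ)ˣ` of order `p - 1` forces `(p - 1) ∣ t`, and lifting the exponent bounds `k`:
`v_p((p + 1) ^ t - 1) = v_p(t) + 1` for odd `p`, and `v_2(5 ^ t - 1) = v_2(t) + 2`.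
-/

/-- For `t ∈ ℕ`: `N 0 = 0`; `N t = 2` for odd `t`;
`N t = 2 * ∏_{p prime, (p-1) ∣ t} p^(v_p(t)+1)` for even positive `t`.
(Any prime `p` with `(p-1) ∣ t` satisfies `p ≤ t + 1 < t + 2`.) -/
def Npaper (t : ℕ) : ℕ :=
  if t = 0 then 0
  else if t % 2 = 1 then 2
  else 2 * ∏ p ∈ Finset.filter (fun p => p.Prime ∧ (p - 1) ∣ t) (Finset.range (t + 2)),
      p ^ (t.factorization p + 1)

namespace ZMod

variable {m t : ℕ}

theorem exponent_units_dvd_of_dvd {c : ℕ} [NeZero c] (hmc : m ∣ c) :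
    Monoid.exponent (ZMod m)ˣ ∣ Monoid.exponent (ZMod c)ˣ :=
  MonoidHom.exponent_dvd (unitsMap_surjective hmc)

theorem dvd_pow_sub_one_of_exponent_dvd (h : Monoid.exponent (ZMod m)ˣ ∣ t) {x : ℕ}
    (hx : x.Coprime m) : m ∣ x ^ t - 1 := by
  have hu : unitOfCoprime x hx ^ t = 1 := Monoid.exponent_dvd_iff_forall_pow_eq_one.mp h _
  have hcast : ((x ^ t : ℕ) : ZMod m) = ((1 : ℕ) : ZMod m) := by
    simpa [coe_unitOfCoprime] using congrArg Units.val hu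
  exact Nat.dvd_of_mod_eq_zero
    (Nat.sub_mod_eq_zero_of_mod_eq ((natCast_eq_natCast_iff' _ _ m).mp hcast))

theorem dvd_two_of_exponent_dvd (h : Monoid.exponent (ZMod m)ˣ ∣ t) (ht : Odd t) : m ∣ 2 := by
  have hu : (-1 : (ZMod m)ˣ) ^ t = 1 := Monoid.exponent_dvd_iff_forall_pow_eq_one.mp h _
  have hneg : (-1 : ZMod m) = 1 := by
    simpa [ht.neg_one_pow] using congrArg Units.val hu
  rw [← natCast_eq_zero_iff]
  push_cast
  linear_combination -hneg

theorem sub_one_dvd_of_exponent_dvd {p : ℕ} (hp : p.Prime)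
    (h : Monoid.exponent (ZMod p)ˣ ∣ t) : p - 1 ∣ t := by
  have := Fact.mk hp
  rwa [IsCyclic.exponent_eq_card, Nat.card_eq_fintype_card, card_units_eq_totient,
    Nat.totient_prime hp] at h

end ZMod

theorem padicValNat_succ_pow_sub_one {p t : ℕ} [hp : Fact p.Prime] (hodd : Odd p) (ht : t ≠ 0) :
    padicValNat p ((p + 1) ^ t - 1) = padicValNat p t + 1 := by
  have hndvd : ¬p ∣ p + 1 := by
    rw [← Nat.dvd_add_iff_right dvd_rfl, Nat.dvd_one]
    exact hp.out.ne_one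
  simpa [padicValNat_self, add_comm] using
    padicValNat.pow_sub_pow (x := p + 1) (y := 1) hodd (Nat.succ_lt_succ hp.out.pos) (by simp)
      hndvd ht

theorem padicValNat_two_five_pow_sub_one {t : ℕ} (ht : t ≠ 0) (hev : Even t) :
    padicValNat 2 (5 ^ t - 1) = padicValNat 2 t + 2 := by
  have h := padicValNat.pow_two_sub_one (x := 5) (by norm_num) (by norm_num) ht hev
  have h6 : padicValNat 2 6 = 1 := by
    rw [show 6 = 2 * 3 from rfl, padicValNat.mul (by norm_num) (by norm_num), padicValNat_self,
      padicValNat.eq_zero_of_not_dvd (by norm_num)]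
  have h4 : padicValNat 2 4 = 2 := by
    rw [show 4 = 2 ^ 2 from rfl, padicValNat.prime_pow]
  simp only [show 5 + 1 = 6 from rfl, show 5 - 1 = 4 from rfl, h6, h4] at h
  omega

theorem le_factorization_add_one_of_exponent_dvd {p k t : ℕ} (hp : p.Prime) (hodd : Odd p)
    (ht : t ≠ 0) (h : Monoid.exponent (ZMod (p ^ k))ˣ ∣ t) : k ≤ t.factorization p + 1 := by
  have := Fact.mk hp
  have hcop : (p + 1).Coprime (p ^ k) := Nat.Coprime.pow_right _ (by simp)
  have hpos : 0 < (p + 1) ^ t - 1 :=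
    Nat.sub_pos_of_lt (Nat.one_lt_pow ht (Nat.succ_lt_succ hp.pos))
  rw [Nat.factorization_def t hp, ← padicValNat_succ_pow_sub_one hodd ht,
    ← padicValNat_dvd_iff_le hpos.ne']
  exact ZMod.dvd_pow_sub_one_of_exponent_dvd h hcop

theorem le_factorization_two_add_two_of_exponent_dvd {k t : ℕ} (ht : t ≠ 0) (hev : Even t)
    (h : Monoid.exponent (ZMod (2 ^ k))ˣ ∣ t) : k ≤ t.factorization 2 + 2 := by
  have hcop : Nat.Coprime 5 (2 ^ k) := Nat.Coprime.pow_right _ (by norm_num)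
  have hpos : 0 < 5 ^ t - 1 := Nat.sub_pos_of_lt (Nat.one_lt_pow ht (by norm_num))
  rw [Nat.factorization_def t Nat.prime_two, ← padicValNat_two_five_pow_sub_one ht hev,
    ← padicValNat_dvd_iff_le hpos.ne']
  exact ZMod.dvd_pow_sub_one_of_exponent_dvd h hcop

section Npaper

variable {t : ℕ}

theorem Npaper_of_odd (ht : Odd t) : Npaper t = 2 := by
  rw [Npaper, if_neg (by rintro rfl; simp at ht), if_pos (Nat.odd_iff.mp ht)]

theorem pow_factorization_succ_mul_two_dvd_Npaper (ht : t ≠ 0) (hev : Even t) {p : ℕ}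
    (hp : p.Prime) (hpt : p - 1 ∣ t) : 2 * p ^ (t.factorization p + 1) ∣ Npaper t := by
  rw [Npaper, if_neg ht, if_neg (by rw [← Nat.odd_iff, Nat.not_odd_iff_even]; exact hev)]
  refine mul_dvd_mul_left 2 (Finset.dvd_prod_of_mem _ (Finset.mem_filter.mpr ⟨?_, hp, hpt⟩))
  have := Nat.le_of_dvd (Nat.pos_of_ne_zero ht) hpt
  rw [Finset.mem_range]
  omega

theorem prime_pow_dvd_Npaper_of_exponent_dvd (ht : t ≠ 0) (hev : Even t) {p k : ℕ}
    (hp : p.Prime) (h : Monoid.exponent (ZMod (p ^ k))ˣ ∣ t) : p ^ k ∣ Npaper t := by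
  rcases Nat.eq_zero_or_pos k with rfl | hk
  · exact one_dvd _
  have : NeZero (p ^ k) := ⟨pow_ne_zero k hp.ne_zero⟩
  have hpt : p - 1 ∣ t := ZMod.sub_one_dvd_of_exponent_dvd hp
    ((ZMod.exponent_units_dvd_of_dvd (dvd_pow_self p hk.ne')).trans h)
  refine dvd_trans ?_ (pow_factorization_succ_mul_two_dvd_Npaper ht hev hp hpt)
  rcases hp.eq_two_or_odd' with rfl | hodd
  · rw [← pow_succ']
    exact pow_dvd_pow 2 (le_factorization_two_add_two_of_exponent_dvd ht hev h)
  · exact dvd_mul_of_dvd_right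
      (pow_dvd_pow p (le_factorization_add_one_of_exponent_dvd hp hodd ht h)) 2

end Npaper

theorem stmt_1_general (t c : ℕ) (hc : 1 ≤ c)
    (h : Monoid.exponent (ZMod c)ˣ ∣ t) :
    c ∣ Npaper t := by
  have : NeZero c := ⟨by omega⟩
  rcases eq_or_ne t 0 with rfl | ht
  · simp [Npaper]
  rcases Nat.even_or_odd t with hev | hodd
  · rw [Nat.dvd_iff_prime_pow_dvd_dvd]
    intro p k hp hpk
    exact prime_pow_dvd_Npaper_of_exponent_dvd ht hev hp
      ((ZMod.exponent_units_dvd_of_dvd hpk).trans h)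
  · rw [Npaper_of_odd hodd]
    exact ZMod.dvd_two_of_exponent_dvd h hodd

/-- If the exponent of `(ℤ/cℤ)ˣ` divides `t`, then `c ∣ N t`. -/
theorem stmt_1 (t c : ℕ) (ht : 1 ≤ t) (hc : 1 ≤ c)
    (h : Monoid.exponent (ZMod c)ˣ ∣ t) :
    c ∣ Npaper t :=
  stmt_1_general t c hc h
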